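/- arXiv:0709.1762 — 2 statements merged into one kernel-verified Lean document; each statement's English description precedes it below -/
import Mathlib

section
/- Let F : a → C be a ∂-functor from a Frobenius exact category to a triangulated category which vanishes on projective objects. Then the induced functor F̄ : a̲ → C on the stable category is naturally a triangle functor, with the natural isomorphism F∘S ≅ [1]∘F coming from the connecting morphisms of the defining conflations X ↪ I(X) ↠ S(X). -/
open CategoryTheory CategoryTheory.Limits CategoryTheory.Pretriangulated

universe v u v' u'

/-- A conflation (inflation–deflation pair) in a category. -/
structure Conflation (a : Type u) [Category.{v} a] where
  X : a
  Y : a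
  Z : a
  i : X ⟶ Y
  d : Y ⟶ Z

/-- A Frobenius exact category, presented by its class of conflations, its class
of projective-injective objects, and a chosen conflation `X ↪ I(X) ↠ S(X)` into a
projective-injective object for every `X` (producing the translation `S` of the
stable category). -/
structure FrobeniusData (a : Type u) [Category.{v} a] [Preadditive a] where
  /-- the conflations of the exact structure -/
  E : Conflation a → Prop
  /-- the projective(-injective) objects -/
  proj : a → Prop
  /-- chosen projective-injective envelope -/
  I : a → a
  ι : ∀ X : a, X ⟶ I X
  /-- the translation on objects -/
  S : a → a
  π : ∀ X : a, I X ⟶ S X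
  projI : ∀ X : a, proj (I X)
  confI : ∀ X : a, E ⟨X, I X, S X, ι X, π X⟩
  /-- projectives are injective w.r.t. conflations -/
  inj_proj : ∀ (c : Conflation a), E c → ∀ (P : a), proj P →
    ∀ g : c.X ⟶ P, ∃ l : c.Y ⟶ P, c.i ≫ l = g
  /-- projectives are projective w.r.t. conflations -/
  proj_proj : ∀ (c : Conflation a), E c → ∀ (P : a), proj P →
    ∀ g : P ⟶ c.Z, ∃ l : P ⟶ c.Y, l ≫ c.d = g

/-- A `∂`-functor from an exact category `(a, E)` to a triangulated category `C`:
an additive functor together with connecting morphisms turning conflations into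
distinguished triangles, naturally in the conflation. -/
structure DeltaFunctor (a : Type u) [Category.{v} a] [Preadditive a]
    (E : Conflation a → Prop)
    (C : Type u') [Category.{v'} C] [HasZeroObject C] [HasShift C ℤ]
    [Preadditive C] [∀ n : ℤ, (shiftFunctor C n).Additive] [Pretriangulated C] where
  F : a ⥤ C
  additive : F.Additive
  w : ∀ c : Conflation a, E c → (F.obj c.Z ⟶ (F.obj c.X)⟦(1 : ℤ)⟧)
  tri : ∀ (c : Conflation a) (hc : E c),
    Triangle.mk (F.map c.i) (F.map c.d) (w c hc) ∈ distTriang C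
  nat : ∀ (c c' : Conflation a) (hc : E c) (hc' : E c')
    (f : c.X ⟶ c'.X) (g : c.Y ⟶ c'.Y) (h : c.Z ⟶ c'.Z),
    c.i ≫ g = f ≫ c'.i → c.d ≫ h = g ≫ c'.d →
    w c hc ≫ (F.map f)⟦(1 : ℤ)⟧' = F.map h ≫ w c' hc'

/-- let `F` be a `∂`-functor from a Frobenius exact category to a
triangulated category `C` vanishing on projectives. Then the induced functor `F̄`
on the stable category is a triangle functor: `F` is well defined on stable
hom-sets, the connecting morphisms of the chosen conflations `X ↪ I(X) ↠ S(X)`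
are isomorphisms `F(S X) ≅ (F X)⟦1⟧` natural in `X`, and every standard triangle
of the stable category (coming from a conflation) is sent to a distinguished
triangle of `C`. -/
theorem deltaFunctor_induces_triangle_functor_on_stable_category
    {a : Type u} [Category.{v} a] [Preadditive a]
    {C : Type u'} [Category.{v'} C] [HasZeroObject C] [HasShift C ℤ]
    [Preadditive C] [∀ n : ℤ, (shiftFunctor C n).Additive] [Pretriangulated C]
    (D : FrobeniusData a) (Φ : DeltaFunctor a D.E C)
    (hvan : ∀ P : a, D.proj P → IsZero (Φ.F.obj P)) :
    -- `F` descends to the stable category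
    (∀ (X Y : a) (f g : X ⟶ Y),
      (∃ (P : a) (u : X ⟶ P) (v : P ⟶ Y), D.proj P ∧ f - g = u ≫ v) →
        Φ.F.map f = Φ.F.map g) ∧
    -- the connecting maps of the chosen conflations give `F ∘ S ≅ [1] ∘ F` …
    (∀ X : a, IsIso (Φ.w ⟨X, D.I X, D.S X, D.ι X, D.π X⟩ (D.confI X))) ∧
    -- … naturally in `X`
    (∀ (X Y : a) (f : X ⟶ Y) (If : D.I X ⟶ D.I Y) (Sf : D.S X ⟶ D.S Y),
      D.ι X ≫ If = f ≫ D.ι Y → D.π X ≫ Sf = If ≫ D.π Y →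
      Φ.F.map Sf ≫ Φ.w ⟨Y, D.I Y, D.S Y, D.ι Y, D.π Y⟩ (D.confI Y) =
        Φ.w ⟨X, D.I X, D.S X, D.ι X, D.π X⟩ (D.confI X) ≫ (Φ.F.map f)⟦(1 : ℤ)⟧') ∧
    -- every standard triangle of the stable category is sent to a
    -- distinguished triangle
    (∀ (c : Conflation a) (hc : D.E c) (u : c.Y ⟶ D.I c.X) (v : c.Z ⟶ D.S c.X),
      c.i ≫ u = D.ι c.X → c.d ≫ v = u ≫ D.π c.X →
      Triangle.mk (Φ.F.map c.i) (Φ.F.map c.d)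
        (Φ.F.map v ≫ Φ.w ⟨c.X, D.I c.X, D.S c.X, D.ι c.X, D.π c.X⟩ (D.confI c.X))
        ∈ distTriang C) := by
  have : Φ.F.Additive := Φ.additive
  refine ⟨?_, ?_, ?_, ?_⟩
  · rintro X Y f g ⟨P, u, v, hP, huv⟩
    have h0 : Φ.F.map (f - g) = 0 := by
      rw [huv, Φ.F.map_comp, (hvan P hP).eq_of_tgt (Φ.F.map u) 0, zero_comp]
    rw [Φ.F.map_sub, sub_eq_zero] at h0
    exact h0
  · intro X
    exact (Triangle.isZero₂_iff_isIso₃ _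
      (Φ.tri ⟨X, D.I X, D.S X, D.ι X, D.π X⟩ (D.confI X))).1 (hvan _ (D.projI X))
  · intro X Y f If Sf h1 h2
    exact (Φ.nat ⟨X, D.I X, D.S X, D.ι X, D.π X⟩ ⟨Y, D.I Y, D.S Y, D.ι Y, D.π Y⟩
      (D.confI X) (D.confI Y) f If Sf h1 h2).symm
  · intro c hc u v h1 h2
    have key := Φ.nat c ⟨c.X, D.I c.X, D.S c.X, D.ι c.X, D.π c.X⟩ hc (D.confI c.X)
      (𝟙 c.X) u v (by simpa using h1) h2
    rw [Φ.F.map_id, (shiftFunctor C (1:ℤ)).map_id, Category.comp_id] at key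
    have := Φ.tri c hc
    rwa [key] at this
end

section
/- Let A be an abelian category and T ∈ A with R = End_A(T)^op. The functor Hom_A(T,-) restricts to a fully faithful functor from App(T) to R-mod, where App(T) consists of objects M with an exact sequence T_1 → T_0 → M → 0 in which T_i ∈ add T, T_0 → M is a T-precover, and the induced map T_1 → Ker(T_0 → M) is a T-precover. -/
open CategoryTheory CategoryTheory.Limits Opposite ZeroObject

universe v u

variable {A : Type u} [Category.{v} A] [Abelian A]

/-- the `n`-fold direct sum `T ⊕ ⋯ ⊕ T`. -/
noncomputable def npow (T : A) : ℕ → A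
  | 0 => 0
  | n + 1 => T ⊞ npow T n

/-- membership in `add T`: direct summands of finite direct sums of copies of `T`. -/
def InAddT (T : A) (P : A) : Prop :=
  ∃ (n : ℕ) (Q : A), Nonempty ((P ⊞ Q) ≅ npow T n)

/-- `App(T)`: objects `M` with an exact presentation `T₁ → T₀ → M → 0` where
`T₀ → M` is a `T`-precover and the induced map `T₁ → Ker(T₀ → M)` is a
`T`-precover. -/
def InApp (T : A) (M : A) : Prop :=
  ∃ (T₁ T₀ : A) (_ : InAddT T T₁) (_ : InAddT T T₀)
    (f₁ : T₁ ⟶ T₀) (f₀ : T₀ ⟶ M) (hw : f₁ ≫ f₀ = 0),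
      Epi f₀ ∧ (ShortComplex.mk f₁ f₀ hw).Exact ∧
      (∀ g : T ⟶ M, ∃ h : T ⟶ T₀, h ≫ f₀ = g) ∧
      (∀ g : T ⟶ kernel f₀, ∃ h : T ⟶ T₁, h ≫ kernel.lift f₀ f₁ hw = g)

/-!
By the Yoneda lemma, `Hom_A(T,-)` is bijective on morphisms out of `T`, and `Hom_A(T,T)` is the
free module of rank one; both properties pass to finite biproducts and to retracts, hence to
`add T`. For `M ∈ App(T)` the two precover conditions say precisely that
`Hom(T,T₁) → Hom(T,T₀) → Hom(T,M) → 0` is exact, which presents `Hom(T,M)` by finitely generated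
projectives. Full faithfulness descends from `T₀` to its cokernel `M`: a module map out of
`Hom(T,M)` pulls back to a morphism `T₀ → N`, which kills `T₁` by faithfulness on `T₁` and so
factors through `M`.
-/

namespace CategoryTheory.Functor

variable {C : Type*} {D : Type*} [Category C] [Category D] (F : C ⥤ D)

lemma map_bijective_of_retract {P P' N : C} (h : Retract P P')
    (hP' : Function.Bijective (F.map : (P' ⟶ N) → (F.obj P' ⟶ F.obj N))) :
    Function.Bijective (F.map : (P ⟶ N) → (F.obj P ⟶ F.obj N)) := by
  refine ⟨fun f f' hf => ?_, fun φ => ?_⟩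
  · have : h.r ≫ f = h.r ≫ f' := hP'.1 (by simp only [map_comp, hf])
    simpa using h.i ≫= this
  · obtain ⟨a, ha⟩ := hP'.2 (F.map h.r ≫ φ)
    exact ⟨h.i ≫ a, by rw [map_comp, ha, ← Category.assoc, ← map_comp, h.retract, map_id,
      Category.id_comp]⟩

lemma map_bijective_of_isZero [Limits.HasZeroMorphisms C] [Limits.HasZeroMorphisms D]
    [F.PreservesZeroMorphisms] {P N : C} (hP : IsZero P) :
    Function.Bijective (F.map : (P ⟶ N) → (F.obj P ⟶ F.obj N)) :=
  ⟨fun _ _ _ => hP.eq_of_src _ _, fun _ => ⟨0, (F.map_isZero hP).eq_of_src _ _⟩⟩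

lemma map_bijective_biprod [Preadditive C] [Preadditive D] [F.Additive] {P Q N : C}
    [HasBinaryBiproduct P Q]
    (hP : Function.Bijective (F.map : (P ⟶ N) → (F.obj P ⟶ F.obj N)))
    (hQ : Function.Bijective (F.map : (Q ⟶ N) → (F.obj Q ⟶ F.obj N))) :
    Function.Bijective (F.map : (P ⊞ Q ⟶ N) → (F.obj (P ⊞ Q) ⟶ F.obj N)) := by
  refine ⟨fun f f' hf => biprod.hom_ext' _ _ (hP.1 ?_) (hQ.1 ?_), fun φ => ?_⟩
  · simp only [map_comp, hf]
  · simp only [map_comp, hf]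
  · obtain ⟨a, ha⟩ := hP.2 (F.map biprod.inl ≫ φ)
    obtain ⟨b, hb⟩ := hQ.2 (F.map biprod.inr ≫ φ)
    refine ⟨biprod.fst ≫ a + biprod.snd ≫ b, ?_⟩
    rw [F.map_add, map_comp, map_comp, ha, hb, ← Category.assoc, ← Category.assoc,
      ← Preadditive.add_comp, ← map_comp, ← map_comp, ← F.map_add, biprod.total, map_id,
      Category.id_comp]

lemma map_bijective_of_exact [Abelian C] [Limits.HasZeroMorphisms D] [F.PreservesZeroMorphisms]
    (S : ShortComplex C) (hS : S.Exact) [Epi S.g] [Epi (F.map S.g)] {N : C}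
    (h₁ : Function.Injective (F.map : (S.X₁ ⟶ N) → (F.obj S.X₁ ⟶ F.obj N)))
    (h₂ : Function.Bijective (F.map : (S.X₂ ⟶ N) → (F.obj S.X₂ ⟶ F.obj N))) :
    Function.Bijective (F.map : (S.X₃ ⟶ N) → (F.obj S.X₃ ⟶ F.obj N)) := by
  refine ⟨fun f f' hf => (cancel_epi S.g).1 (h₂.1 (by simp only [map_comp, hf])), fun φ => ?_⟩
  obtain ⟨u, hu⟩ := h₂.2 (F.map S.g ≫ φ)
  have hfu : S.f ≫ u = 0 := h₁ (by rw [map_comp, hu, ← Category.assoc, ← map_comp, S.zero,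
    F.map_zero, Limits.zero_comp, F.map_zero])
  obtain ⟨l, hl⟩ := hS.desc' u hfu
  exact ⟨l, (cancel_epi (F.map S.g)).1 (by rw [← map_comp, hl, hu])⟩

end CategoryTheory.Functor

namespace CategoryTheory

variable {C : Type*} [Category C] [Preadditive C]

lemma preadditiveCoyonedaObj_map_bijective (T N : C) :
    Function.Bijective ((preadditiveCoyonedaObj T).map : (T ⟶ N) → _) :=
  ⟨fun f f' h => by simpa using (congr($h (𝟙 T)) : 𝟙 T ≫ f = 𝟙 T ≫ f'),
    fun φ => ⟨φ (𝟙 T), by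
      refine ModuleCat.hom_ext (LinearMap.ext fun (g : T ⟶ T) => ?_)
      change g ≫ φ (𝟙 T) = φ g
      conv_rhs => rw [← Category.comp_id g]
      exact (φ.hom.map_smul (MulOpposite.op g) (𝟙 T)).symm⟩⟩

noncomputable def endMulOppositeEquivObj (T : C) :
    (End T)ᵐᵒᵖ ≃ₗ[(End T)ᵐᵒᵖ] (preadditiveCoyonedaObj T).obj T where
  toFun r := r.unop
  invFun f := MulOpposite.op (f : T ⟶ T)
  map_add' _ _ := rfl
  map_smul' _ _ := rfl
  left_inv _ := rfl
  right_inv _ := rfl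

lemma preadditiveCoyonedaObj_map_exact {T X Y Z : C} (f : X ⟶ Y) (g : Y ⟶ Z) [HasKernel g]
    (hw : f ≫ g = 0) (hpre : ∀ k : T ⟶ kernel g, ∃ h : T ⟶ X, h ≫ kernel.lift g f hw = k) :
    Function.Exact ((preadditiveCoyonedaObj T).map f) ((preadditiveCoyonedaObj T).map g) := by
  intro (k : T ⟶ Y)
  change k ≫ g = 0 ↔ ∃ h : T ⟶ X, h ≫ f = k
  refine ⟨fun hk => ?_, fun ⟨h, hh⟩ => by rw [← hh, Category.assoc, hw, comp_zero]⟩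
  obtain ⟨h, hh⟩ := hpre (kernel.lift g k hk)
  exact ⟨h, by simpa using hh =≫ kernel.ι g⟩

end CategoryTheory

lemma Module.finitePresentation_of_surjective_of_exact {R M₁ M₀ M : Type*} [Ring R]
    [AddCommGroup M₁] [AddCommGroup M₀] [AddCommGroup M] [Module R M₁] [Module R M₀] [Module R M]
    [Module.FinitePresentation R M₀] [Module.Finite R M₁] (g : M₁ →ₗ[R] M₀) (f : M₀ →ₗ[R] M)
    (hf : Function.Surjective f) (hgf : Function.Exact g f) : Module.FinitePresentation R M :=
  Module.finitePresentation_of_surjective f hf (by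
    rw [LinearMap.exact_iff.mp hgf]; exact Submodule.fg_range g)

theorem InAddT.induction {T : A} (p : A → Prop) (hzero : p 0) (hT : p T)
    (hbiprod : ∀ X Y : A, p X → p Y → p (X ⊞ Y)) (hretract : ∀ X Y : A, Retract X Y → p Y → p X)
    {P : A} (hP : InAddT T P) : p P := by
  obtain ⟨n, Q, ⟨e⟩⟩ := hP
  have hpow : ∀ n, p (npow T n) := fun n => by
    induction n with
    | zero => exact hzero
    | succ n ih => exact hbiprod T _ hT ih
  exact hretract P _ ⟨biprod.inl ≫ e.hom, e.inv ≫ biprod.fst, by simp⟩ (hpow n)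

lemma InAddT.projective_finite {T P : A} (hP : InAddT T P) :
    Module.Projective (End T)ᵐᵒᵖ ((preadditiveCoyonedaObj T).obj P) ∧
      Module.Finite (End T)ᵐᵒᵖ ((preadditiveCoyonedaObj T).obj P) := by
  refine hP.induction (fun P => Module.Projective (End T)ᵐᵒᵖ ((preadditiveCoyonedaObj T).obj P) ∧
      Module.Finite (End T)ᵐᵒᵖ ((preadditiveCoyonedaObj T).obj P)) ?_ ?_ ?_ ?_
  · have := ModuleCat.subsingleton_of_isZero
      ((preadditiveCoyonedaObj T).map_isZero (isZero_zero A))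
    exact ⟨inferInstance, inferInstance⟩
  · exact ⟨.of_equiv' (endMulOppositeEquivObj T), .equiv (endMulOppositeEquivObj T)⟩
  · intro X Y hX hY
    obtain ⟨_, _⟩ := hX
    obtain ⟨_, _⟩ := hY
    have := preservesBinaryBiproducts_of_preservesBiproducts (preadditiveCoyonedaObj T)
    let e :=
      ((preadditiveCoyonedaObj T).mapBiprod X Y ≪≫ ModuleCat.biprodIsoProd _ _).toLinearEquiv
    exact ⟨.of_equiv' e.symm, .equiv e.symm⟩
  · intro X Y h hY
    obtain ⟨_, _⟩ := hY
    let h' := h.map (preadditiveCoyonedaObj T)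
    have hri : h'.r.hom ∘ₗ h'.i.hom = LinearMap.id := congr($(h'.retract).hom)
    exact ⟨.of_split _ _ hri,
      .of_surjective h'.r.hom (Function.LeftInverse.surjective (LinearMap.congr_fun hri))⟩

lemma InAddT.preadditiveCoyonedaObj_map_bijective {T P : A} (hP : InAddT T P) (N : A) :
    Function.Bijective ((preadditiveCoyonedaObj T).map : (P ⟶ N) → _) :=
  hP.induction (fun P => Function.Bijective ((preadditiveCoyonedaObj T).map : (P ⟶ N) → _))
    ((preadditiveCoyonedaObj T).map_bijective_of_isZero (isZero_zero A))
    (CategoryTheory.preadditiveCoyonedaObj_map_bijective T N)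
    (fun _ _ => (preadditiveCoyonedaObj T).map_bijective_biprod)
    (fun _ _ h => (preadditiveCoyonedaObj T).map_bijective_of_retract h)

/-- for `T ∈ A` and `R = End_A(T)^op`, the functor `Hom_A(T,-)`
restricts to a fully faithful functor `App(T) → R-mod`: it takes values in
finitely presented `R`-modules and is bijective on Hom-sets between objects of
`App(T)`. -/
theorem hom_functor_fullyFaithful_on_App (T : A) :
    (∀ M : A, InApp T M →
      Module.FinitePresentation (End T)ᵐᵒᵖ ((preadditiveCoyonedaObj T).obj M)) ∧
    (∀ M N : A, InApp T M → InApp T N →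
      Function.Bijective
        (fun f : M ⟶ N => (preadditiveCoyonedaObj T).map f)) := by
  refine ⟨fun M ⟨T₁, T₀, h₁, h₀, f₁, f₀, hw, _, _, hpre₀, hpre₁⟩ => ?_,
    fun M N ⟨T₁, T₀, h₁, h₀, f₁, f₀, hw, _, hex, hpre₀, _⟩ _ => ?_⟩
  · obtain ⟨_, _⟩ := h₀.projective_finite
    have := h₁.projective_finite.2
    have := Module.finitePresentation_of_projective (End T)ᵐᵒᵖ ((preadditiveCoyonedaObj T).obj T₀)
    exact Module.finitePresentation_of_surjective_of_exact _
      ((preadditiveCoyonedaObj T).map f₀).hom hpre₀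
      (preadditiveCoyonedaObj_map_exact f₁ f₀ hw hpre₁)
  · have : Epi ((preadditiveCoyonedaObj T).map f₀) := (ModuleCat.epi_iff_surjective _).2 hpre₀
    exact (preadditiveCoyonedaObj T).map_bijective_of_exact (.mk f₁ f₀ hw) hex
      (h₁.preadditiveCoyonedaObj_map_bijective N).1 (h₀.preadditiveCoyonedaObj_map_bijective N)
end
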